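/- For every real λ > 0, D(λ) > 0, where D(λ) = −4 − 4λ − (λ⁴ + 4λ² − 8)e^λ + (4λ − 4)e^{2λ}. Equivalently, 4(e^λ − 1 − λ)(λ(e^λ − 1) − (e^λ − 1 − λ)) > λ⁴e^λ for all λ > 0. -/
import Mathlib

/-- `D(λ) = -4 - 4λ - (λ⁴ + 4λ² - 8)e^λ + (4λ - 4)e^{2λ}`. -/
noncomputable def D (lam : ℝ) : ℝ :=
  -4 - 4 * lam - (lam ^ 4 + 4 * lam ^ 2 - 8) * Real.exp lam +
    (4 * lam - 4) * Real.exp (2 * lam)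

lemma real_exp_tsum (x : ℝ) : Real.exp x = ∑' n : ℕ, x ^ n / Nat.factorial n := by
  rw [Real.exp_eq_exp_ℝ, NormedSpace.exp_eq_tsum_div]

lemma nat_ineq1 (k : ℕ) : (k + 1) * (k + 2) ≤ 2 * 3 ^ k := by
  induction k with
  | zero => norm_num
  | succ n ih =>
      calc (n + 1 + 1) * (n + 1 + 2) = (n + 2) * (n + 3) := by ring
        _ ≤ (n + 2) * (3 * (n + 1)) := Nat.mul_le_mul_left _ (by omega)
        _ = 3 * ((n + 1) * (n + 2)) := by ring
        _ ≤ 3 * (2 * 3 ^ n) := Nat.mul_le_mul_left 3 ih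
        _ = 2 * 3 ^ (n + 1) := by ring

lemma nat_ineq2 (k : ℕ) : (k + 2) * 2 ^ k ≤ 2 * 3 ^ k := by
  induction k with
  | zero => norm_num
  | succ n ih =>
      calc (n + 1 + 2) * 2 ^ (n + 1) = (2 * (n + 3)) * 2 ^ n := by ring
        _ ≤ (3 * (n + 2)) * 2 ^ n := Nat.mul_le_mul_right _ (by omega)
        _ = 3 * ((n + 2) * 2 ^ n) := by ring
        _ ≤ 3 * (2 * 3 ^ n) := Nat.mul_le_mul_left 3 ih
        _ = 2 * 3 ^ (n + 1) := by ring

lemma fact_ineq1 (k : ℕ) : Nat.factorial (k + 2) ≤ 2 * 3 ^ k * Nat.factorial k := by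
  have : Nat.factorial (k + 2) = (k + 1) * (k + 2) * Nat.factorial k := by
    rw [Nat.factorial_succ, Nat.factorial_succ]; ring
  rw [this]
  exact Nat.mul_le_mul_right _ (nat_ineq1 k)

lemma fact_ineq2 (k : ℕ) : 2 ^ k * Nat.factorial (k + 2) ≤ (k + 1) * (2 * 3 ^ k * Nat.factorial k) := by
  have h : Nat.factorial (k + 2) = (k + 1) * (k + 2) * Nat.factorial k := by
    rw [Nat.factorial_succ, Nat.factorial_succ]; ring
  rw [h]
  calc 2 ^ k * ((k + 1) * (k + 2) * Nat.factorial k) = (k + 1) * (((k + 2) * 2 ^ k) * Nat.factorial k) := by ring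
    _ ≤ (k + 1) * ((2 * 3 ^ k) * Nat.factorial k) :=
        Nat.mul_le_mul_left _ (Nat.mul_le_mul_right _ (nat_ineq2 k))
    _ = (k + 1) * (2 * 3 ^ k * Nat.factorial k) := by ring

lemma tail1 (x : ℝ) : ∑' k : ℕ, x ^ (k + 1) / Nat.factorial (k + 1) = Real.exp x - 1 := by
  have h := Summable.sum_add_tsum_nat_add 1 (Real.summable_pow_div_factorial x)
  rw [← real_exp_tsum] at h
  have hr : ∑ i ∈ Finset.range 1, x ^ i / (Nat.factorial i : ℝ) = 1 := by
    simp [Nat.factorial]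
  rw [hr] at h
  linarith

lemma tail2 (x : ℝ) : ∑' k : ℕ, x ^ (k + 2) / Nat.factorial (k + 2) = Real.exp x - 1 - x := by
  have h := Summable.sum_add_tsum_nat_add 2 (Real.summable_pow_div_factorial x)
  rw [← real_exp_tsum] at h
  have hr : ∑ i ∈ Finset.range 2, x ^ i / (Nat.factorial i : ℝ) = 1 + x := by
    simp [Finset.sum_range_succ, Nat.factorial]
  rw [hr] at h
  linarith

lemma summable_shift (x : ℝ) (m : ℕ) :
    Summable (fun k : ℕ => x ^ (k + m) / Nat.factorial (k + m)) :=
  ((summable_nat_add_iff m).mpr (Real.summable_pow_div_factorial x))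

lemma repB (x : ℝ) :
    ∑' k : ℕ, (k + 1 : ℝ) * x ^ (k + 2) / Nat.factorial (k + 2) = (x - 1) * Real.exp x + 1 := by
  have key : ∀ k : ℕ, (k + 1 : ℝ) * x ^ (k + 2) / Nat.factorial (k + 2) =
      x * (x ^ (k + 1) / Nat.factorial (k + 1)) - x ^ (k + 2) / Nat.factorial (k + 2) := by
    intro k
    have h2 : (Nat.factorial (k + 2) : ℝ) = (k + 2) * Nat.factorial (k + 1) := by
      exact_mod_cast Nat.factorial_succ (k + 1)
    have h1 : (Nat.factorial (k + 1) : ℝ) ≠ 0 := by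
      exact_mod_cast (Nat.factorial_ne_zero (k + 1))
    have h3 : (k + 2 : ℝ) ≠ 0 := by positivity
    rw [h2]
    field_simp
    ring
  rw [tsum_congr key]
  have hs1 : Summable (fun k : ℕ => x * (x ^ (k + 1) / Nat.factorial (k + 1))) :=
    (summable_shift x 1).mul_left x
  rw [Summable.tsum_sub hs1 (summable_shift x 2), tsum_mul_left, tail1, tail2]
  ring

lemma claimA {x : ℝ} (hx : 0 ≤ x) :
    x ^ 2 / 2 * Real.exp (x / 3) + x ^ 4 / 72 ≤ Real.exp x - 1 - x := by
  rw [← tail2]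
  have hite : Summable (fun k : ℕ => if k = 2 then x ^ 4 / 72 else 0) := by
    apply summable_of_ne_finset_zero (s := {2})
    intro k hk
    simp at hk
    simp [hk]
  have hmul : Summable (fun k : ℕ => x ^ 2 / 2 * ((x / 3) ^ k / Nat.factorial k)) :=
    (Real.summable_pow_div_factorial (x / 3)).mul_left _
  have hA : x ^ 2 / 2 * Real.exp (x / 3) + x ^ 4 / 72 =
      ∑' k : ℕ, (x ^ 2 / 2 * ((x / 3) ^ k / Nat.factorial k) + (if k = 2 then x ^ 4 / 72 else 0)) := by
    rw [Summable.tsum_add hmul hite, tsum_mul_left, ← real_exp_tsum, tsum_ite_eq]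
  rw [hA]
  apply Summable.tsum_le_tsum _ (hmul.add hite) (summable_shift x 2)
  intro k
  rcases eq_or_ne k 2 with rfl | hk
  · simp [Nat.factorial]
    ring_nf
    nlinarith [pow_nonneg hx 4]
  · simp only [hk, if_false, add_zero]
    have heq : x ^ 2 / 2 * ((x / 3) ^ k / Nat.factorial k) = x ^ (k + 2) / (2 * 3 ^ k * Nat.factorial k) := by
      rw [div_pow]
      field_simp
      ring
    rw [heq]
    apply div_le_div_of_nonneg_left (pow_nonneg hx _) (by positivity)
    exact_mod_cast fact_ineq1 k
  
lemma claimB {x : ℝ} (hx : 0 ≤ x) :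
    x ^ 2 / 2 * Real.exp (2 * x / 3) ≤ (x - 1) * Real.exp x + 1 := by
  rw [← repB]
  have hmul : Summable (fun k : ℕ => x ^ 2 / 2 * ((2 * x / 3) ^ k / Nat.factorial k)) :=
    (Real.summable_pow_div_factorial (2 * x / 3)).mul_left _
  have hsB : Summable (fun k : ℕ => (k + 1 : ℝ) * x ^ (k + 2) / Nat.factorial (k + 2)) := by
    apply Summable.of_nonneg_of_le (fun k => by positivity)
        (fun k => ?_) ((summable_shift x 1).mul_left x)
    have h2 : (Nat.factorial (k + 2) : ℝ) = (k + 2) * Nat.factorial (k + 1) := by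
      exact_mod_cast Nat.factorial_succ (k + 1)
    have h1 : (0:ℝ) < (Nat.factorial (k + 1) : ℝ) := by
      exact_mod_cast (Nat.factorial_pos (k + 1))
    rw [h2]
    rw [div_le_iff₀ (by positivity)]
    have : x * (x ^ (k + 1) / Nat.factorial (k + 1)) * ((k + 2) * Nat.factorial (k + 1)) = (k + 2) * x ^ (k + 2) := by
      field_simp; ring
    rw [this]
    have hp : 0 ≤ x ^ (k + 2) := pow_nonneg hx _
    nlinarith
  have hL : x ^ 2 / 2 * Real.exp (2 * x / 3) =
      ∑' k : ℕ, x ^ 2 / 2 * ((2 * x / 3) ^ k / Nat.factorial k) := by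
    rw [tsum_mul_left, ← real_exp_tsum]
  rw [hL]
  apply Summable.tsum_le_tsum _ hmul hsB
  intro k
  have heq : x ^ 2 / 2 * ((2 * x / 3) ^ k / Nat.factorial k) =
      (2 ^ k * x ^ (k + 2)) / (2 * 3 ^ k * Nat.factorial k) := by
    rw [div_pow, mul_pow]
    field_simp
    ring
  rw [heq, div_le_div_iff₀ (by positivity) (by positivity)]
  have hcast : (2:ℝ) ^ k * Nat.factorial (k + 2) ≤ (k + 1) * (2 * 3 ^ k * Nat.factorial k) := by
    exact_mod_cast fact_ineq2 k
  have hp : 0 ≤ x ^ (k + 2) := pow_nonneg hx _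
  calc 2 ^ k * x ^ (k + 2) * (Nat.factorial (k + 2) : ℝ) = x ^ (k + 2) * (2 ^ k * Nat.factorial (k + 2)) := by ring
    _ ≤ x ^ (k + 2) * ((k + 1) * (2 * 3 ^ k * Nat.factorial k)) := by
        apply mul_le_mul_of_nonneg_left hcast hp
    _ = (k + 1 : ℝ) * x ^ (k + 2) * (2 * 3 ^ k * Nat.factorial k) := by ring

/-- For every real `λ > 0`, `D(λ) > 0`; equivalently,
`4(e^λ - 1 - λ)(λ(e^λ - 1) - (e^λ - 1 - λ)) > λ⁴ e^λ`. -/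
theorem D_pos (lam : ℝ) (hlam : 0 < lam) :
    0 < D lam ∧
      4 * (Real.exp lam - 1 - lam) *
          (lam * (Real.exp lam - 1) - (Real.exp lam - 1 - lam)) >
        lam ^ 4 * Real.exp lam := by
  have hx : (0:ℝ) ≤ lam := hlam.le
  have hA := claimA hx
  have hB := claimB hx
  have ha : (0:ℝ) < lam ^ 2 / 2 * Real.exp (lam / 3) + lam ^ 4 / 72 := by positivity
  have hb : (0:ℝ) < lam ^ 2 / 2 * Real.exp (2 * lam / 3) := by positivity
  have hprod : (lam ^ 2 / 2 * Real.exp (lam / 3) + lam ^ 4 / 72) *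
      (lam ^ 2 / 2 * Real.exp (2 * lam / 3)) ≤
      (Real.exp lam - 1 - lam) * ((lam - 1) * Real.exp lam + 1) :=
    mul_le_mul hA hB hb.le (le_trans ha.le hA)
  have hee : Real.exp (lam / 3) * Real.exp (2 * lam / 3) = Real.exp lam := by
    rw [← Real.exp_add]; ring_nf
  have hkey : lam ^ 4 * Real.exp lam <
      4 * (Real.exp lam - 1 - lam) * ((lam - 1) * Real.exp lam + 1) := by
    have hlow : lam ^ 4 * Real.exp lam + lam ^ 6 / 36 * Real.exp (2 * lam / 3) =
        4 * ((lam ^ 2 / 2 * Real.exp (lam / 3) + lam ^ 4 / 72) *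
          (lam ^ 2 / 2 * Real.exp (2 * lam / 3))) := by
      rw [← hee]; ring
    have hextra : 0 < lam ^ 6 / 36 * Real.exp (2 * lam / 3) := by positivity
    nlinarith
  have h2 : 4 * (Real.exp lam - 1 - lam) *
      (lam * (Real.exp lam - 1) - (Real.exp lam - 1 - lam)) =
      4 * (Real.exp lam - 1 - lam) * ((lam - 1) * Real.exp lam + 1) := by ring
  constructor
  · have hD : D lam = 4 * (Real.exp lam - 1 - lam) * ((lam - 1) * Real.exp lam + 1) -
        lam ^ 4 * Real.exp lam := by
      unfold D
      rw [two_mul, Real.exp_add]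
      ring
    rw [hD]
    linarith
  · rw [gt_iff_lt, h2]
    exact hkey
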